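/- arXiv:2402.05839 — 6 statements merged into one kernel-verified Lean document; each statement's English description precedes it below -/
import Mathlib

section
/- Let H be a complex Hilbert space, ρ a ℂ-algebra automorphism of B(H), and B a sesquilinear form on H (conjugate-linear in the first argument, linear in the second) satisfying B(ψ, O ψ') = B((ρ(O))* ψ, ψ') for every bounded operator O on H and all ψ, ψ' ∈ H. If B is nondegenerate in its first argument (B(ψ, φ) = 0 for all φ implies ψ = 0) and Hermitian (B(ψ, φ) is the complex conjugate of B(φ, ψ) for all ψ, φ), then ρ is B(H)-regular: (ρ(O))* = ρ⁻¹(O*) for every bounded operator O on H. -/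
open ContinuousLinearMap

/-- If a sesquilinear form `B` on a complex Hilbert space `H` satisfies the
ρ-twisted product property `B(ψ, O ψ') = B((ρ O)* ψ, ψ')` for an algebra automorphism `ρ` of
`B(H)`, and `B` is nondegenerate in its first argument and Hermitian, then `ρ` is
`B(H)`-regular: `(ρ O)* = ρ⁻¹ (O*)` for every bounded operator `O`. -/
theorem regular_of_hermitian_twisted_product
    {H : Type*} [NormedAddCommGroup H] [InnerProductSpace ℂ H] [CompleteSpace H]
    (ρ : (H →L[ℂ] H) ≃ₐ[ℂ] (H →L[ℂ] H))
    (B : H →ₗ⋆[ℂ] H →ₗ[ℂ] ℂ)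
    (htwist : ∀ (O : H →L[ℂ] H) (ψ ψ' : H), B ψ (O ψ') = B (adjoint (ρ O) ψ) ψ')
    (hnondeg : ∀ ψ : H, (∀ φ : H, B ψ φ = 0) → ψ = 0)
    (hherm : ∀ ψ φ : H, B ψ φ = starRingEnd ℂ (B φ ψ)) :
    ∀ O : H →L[ℂ] H, adjoint (ρ O) = ρ.symm (adjoint O) := by
  intro O
  ext ψ
  have key : ∀ φ : H, B (adjoint (ρ O) ψ - ρ.symm (adjoint O) ψ) φ = 0 := by
    intro φ
    have h1 : B ψ (O φ) = B (adjoint (ρ O) ψ) φ := htwist O ψ φ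
    have h2 : B φ (ρ.symm (adjoint O) ψ) = B (O φ) ψ := by
      have h := htwist (ρ.symm (adjoint O)) φ ψ
      rwa [ρ.apply_symm_apply, adjoint_adjoint] at h
    have heq : B (adjoint (ρ O) ψ) φ = B (ρ.symm (adjoint O) ψ) φ := by
      rw [← h1, hherm ψ (O φ), ← h2, ← hherm]
    rw [map_sub, LinearMap.sub_apply, heq, sub_self]
  have h0 := hnondeg _ key
  have := sub_eq_zero.mp h0
  simpa using this
end

section
/- Let H be a complex Hilbert space and K a unitary bounded operator on H. If the inner automorphism ρ(O) := K∘O∘K* of B(H) is B(H)-regular, i.e. K∘O*∘K* = K*∘O*∘K for every bounded operator O on H, then there exists a real number θ such that K = exp(iθ) • K*. -/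
/-!
Since `ρ` is a ⋆-automorphism, `(ρ⁻¹ O)* = ρ⁻¹ (O*)`, so regularity says exactly that `ρ = ρ⁻¹`,
i.e. `K` and `K*` implement the same inner automorphism. The centre of `B(H)` consists of the
scalars, hence `K = α • K*` for a unitary scalar `α`, which is a phase `exp (i θ)`.
-/

open ContinuousLinearMap

theorem StarAlgEquiv.eq_symm_of_map_star_eq_star_symm {R A : Type*} [Add A] [Mul A] [SMul R A]
    [InvolutiveStar A] (ρ : A ≃⋆ₐ[R] A) (hρ : ∀ a, ρ (star a) = star (ρ.symm a)) :
    ρ = ρ.symm := by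
  ext a
  calc ρ a = ρ (star (star a)) := by rw [star_star]
    _ = star (ρ.symm (star a)) := hρ _
    _ = ρ.symm a := by rw [map_star, star_star]

theorem Unitary.conjStarAlgAut_eq_conjStarAlgAut_star {S R : Type*} [Semiring R] [StarRing R]
    [SMul S R] [IsScalarTower S R R] [SMulCommClass S R R] (u : unitary R)
    (h : ∀ a, (u : R) * (star a * star u) = star u * (star a * u)) :
    conjStarAlgAut S R u = conjStarAlgAut S R (star u) := by
  rw [← conjStarAlgAut_symm]
  refine StarAlgEquiv.eq_symm_of_map_star_eq_star_symm _ fun a ↦ ?_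
  simp only [conjStarAlgAut_apply, conjStarAlgAut_symm_apply, star_mul, star_star, mul_assoc]
  exact h a

theorem Unitary.exists_coe_eq_exp_mul_I (α : unitary ℂ) :
    ∃ θ : ℝ, (α : ℂ) = Complex.exp (θ * Complex.I) :=
  ⟨Complex.arg α, by simpa [CStarRing.norm_coe_unitary] using (Complex.norm_mul_exp_arg_mul_I α).symm⟩

/-- If the inner automorphism `ρ(O) = K ∘ O ∘ K*` implemented by a unitary `K`
on a complex Hilbert space is `B(H)`-regular, i.e. `K ∘ O* ∘ K* = K* ∘ O* ∘ K` for every bounded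
operator `O`, then `K = exp(iθ) • K*` for some real `θ`. -/
theorem exists_phase_of_regular
    {H : Type*} [NormedAddCommGroup H] [InnerProductSpace ℂ H] [CompleteSpace H]
    (K : H →L[ℂ] H)
    (hK1 : K ∘L adjoint K = 1) (hK2 : adjoint K ∘L K = 1)
    (hreg : ∀ O : H →L[ℂ] H,
      K ∘L adjoint O ∘L adjoint K = adjoint K ∘L adjoint O ∘L K) :
    ∃ θ : ℝ, K = Complex.exp (θ * Complex.I) • adjoint K := by
  let u : unitary (H →L[ℂ] H) := ⟨K, hK2, hK1⟩
  have hρ : Unitary.conjStarAlgAut ℂ _ u = Unitary.conjStarAlgAut ℂ _ (star u) :=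
    Unitary.conjStarAlgAut_eq_conjStarAlgAut_star u hreg
  obtain ⟨α, hα⟩ := (Unitary.conjStarAlgAut_ext_iff' u (star u)).mp hρ
  obtain ⟨θ, hθ⟩ := Unitary.exists_coe_eq_exp_mul_I α
  exact ⟨θ, hθ ▸ congrArg Subtype.val hα⟩
end

section
/- Let H₀ be a complex Hilbert space and A a unital subalgebra of B(H₀). On the product Hilbert space H := H₀ × H₀, for a₁, a₂ ∈ A let diag(a₁, a₂) denote the bounded operator (x, y) ↦ (a₁ x, a₂ y). Suppose K is a unitary operator on H such that K ∘ diag(a₁, a₂) ∘ K* = diag(a₂, a₁) for all a₁, a₂ ∈ A. Then there exist unitary operators K₂ and K₃ on H₀, each commuting with every element of A, such that K(x, y) = (K₂ y, K₃ x) for all (x, y) ∈ H. -/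
/-!
Write operators on `H₀ ⊕ H₀` as 2×2 operator matrices. As `0, 1 ∈ A`, the twist relation together
with `K* K = 1` gives `K ∘ diag(1, 0) = diag(0, 1) ∘ K`, which forces the diagonal entries of `K`
to vanish. For `K = [[0, K₂], [K₃, 0]]` the identities `K K* = K* K = 1` say entrywise that `K₂`
and `K₃` are unitary, and `K ∘ diag(0, a) = diag(a, 0) ∘ K` says `K₂ a = a K₂`; symmetrically for
`K₃`.
-/

open ContinuousLinearMap

/-- The diagonal operator `diag(a₁, a₂) : (x, y) ↦ (a₁ x, a₂ y)` on the Hilbert-space product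
`H₀ ×₂ H₀`. -/
noncomputable def diagOp {H₀ : Type*} [NormedAddCommGroup H₀] [InnerProductSpace ℂ H₀]
    (a₁ a₂ : H₀ →L[ℂ] H₀) : WithLp 2 (H₀ × H₀) →L[ℂ] WithLp 2 (H₀ × H₀) :=
  ((WithLp.prodContinuousLinearEquiv 2 ℂ H₀ H₀).symm :
      H₀ × H₀ →L[ℂ] WithLp 2 (H₀ × H₀)) ∘L
    (a₁.prodMap a₂) ∘L
    ((WithLp.prodContinuousLinearEquiv 2 ℂ H₀ H₀) :
      WithLp 2 (H₀ × H₀) →L[ℂ] H₀ × H₀)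

section BlockOp

variable {𝕜 E F : Type*} [RCLike 𝕜] [NormedAddCommGroup E] [InnerProductSpace 𝕜 E]
  [NormedAddCommGroup F] [InnerProductSpace 𝕜 F]

noncomputable def blockOp (a : E →L[𝕜] E) (b : F →L[𝕜] E) (c : E →L[𝕜] F) (d : F →L[𝕜] F) :
    WithLp 2 (E × F) →L[𝕜] WithLp 2 (E × F) :=
  ((WithLp.prodContinuousLinearEquiv 2 𝕜 E F).symm : E × F →L[𝕜] WithLp 2 (E × F)) ∘L
    (a.coprod b).prod (c.coprod d) ∘L
    ((WithLp.prodContinuousLinearEquiv 2 𝕜 E F) : WithLp 2 (E × F) →L[𝕜] E × F)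

@[simp]
theorem blockOp_apply (a : E →L[𝕜] E) (b : F →L[𝕜] E) (c : E →L[𝕜] F) (d : F →L[𝕜] F)
    (v : WithLp 2 (E × F)) :
    blockOp a b c d v = WithLp.toLp 2 (a v.fst + b v.snd, c v.fst + d v.snd) :=
  rfl

theorem blockOp_comp_blockOp (a : E →L[𝕜] E) (b : F →L[𝕜] E) (c : E →L[𝕜] F) (d : F →L[𝕜] F)
    (a' : E →L[𝕜] E) (b' : F →L[𝕜] E) (c' : E →L[𝕜] F) (d' : F →L[𝕜] F) :
    blockOp a b c d ∘L blockOp a' b' c' d' =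
      blockOp (a ∘L a' + b ∘L c') (a ∘L b' + b ∘L d') (c ∘L a' + d ∘L c') (c ∘L b' + d ∘L d') := by
  ext v
  simp only [comp_apply, blockOp_apply, add_apply, map_add, WithLp.toLp_fst, WithLp.toLp_snd]
  congr 1
  ext <;> dsimp only <;> abel

theorem blockOp_inj {a a' : E →L[𝕜] E} {b b' : F →L[𝕜] E} {c c' : E →L[𝕜] F}
    {d d' : F →L[𝕜] F} :
    blockOp a b c d = blockOp a' b' c' d' ↔ a = a' ∧ b = b' ∧ c = c' ∧ d = d' := by
  refine ⟨fun h => ?_, by rintro ⟨rfl, rfl, rfl, rfl⟩; rfl⟩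
  have hl x := congrArg WithLp.ofLp (DFunLike.congr_fun h (WithLp.toLp 2 (x, 0)))
  have hr y := congrArg WithLp.ofLp (DFunLike.congr_fun h (WithLp.toLp 2 (0, y)))
  simp only [blockOp_apply, WithLp.toLp_fst, WithLp.toLp_snd, map_zero, add_zero, zero_add,
    Prod.mk.injEq] at hl hr
  exact ⟨ext fun x => (hl x).1, ext fun y => (hr y).1, ext fun x => (hl x).2, ext fun y => (hr y).2⟩

theorem exists_eq_blockOp (T : WithLp 2 (E × F) →L[𝕜] WithLp 2 (E × F)) :
    ∃ a b c d, T = blockOp a b c d := by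
  let ι₁ : E →L[𝕜] WithLp 2 (E × F) :=
    ((WithLp.prodContinuousLinearEquiv 2 𝕜 E F).symm : E × F →L[𝕜] WithLp 2 (E × F)) ∘L inl 𝕜 E F
  let ι₂ : F →L[𝕜] WithLp 2 (E × F) :=
    ((WithLp.prodContinuousLinearEquiv 2 𝕜 E F).symm : E × F →L[𝕜] WithLp 2 (E × F)) ∘L inr 𝕜 E F
  refine ⟨WithLp.fstL 2 𝕜 E F ∘L T ∘L ι₁, WithLp.fstL 2 𝕜 E F ∘L T ∘L ι₂,
    WithLp.sndL 2 𝕜 E F ∘L T ∘L ι₁, WithLp.sndL 2 𝕜 E F ∘L T ∘L ι₂, ?_⟩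
  ext v
  have hv : ι₁ v.fst + ι₂ v.snd = v := by
    simp only [ι₁, ι₂, comp_apply, inl_apply, inr_apply, ← map_add, Prod.mk_add_mk, add_zero,
      zero_add]
    rfl
  conv_lhs => rw [← hv, map_add]
  rfl

theorem one_eq_blockOp : (1 : WithLp 2 (E × F) →L[𝕜] WithLp 2 (E × F)) = blockOp 1 0 0 1 := by
  ext v
  simp only [zero_apply, blockOp_apply, add_zero, zero_add]
  rfl

theorem adjoint_blockOp [CompleteSpace E] [CompleteSpace F]
    (a : E →L[𝕜] E) (b : F →L[𝕜] E) (c : E →L[𝕜] F) (d : F →L[𝕜] F) :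
    adjoint (blockOp a b c d) = blockOp (adjoint a) (adjoint c) (adjoint b) (adjoint d) := by
  refine ((eq_adjoint_iff _ _).2 fun v w => ?_).symm
  simp only [blockOp_apply, WithLp.prod_inner_apply, WithLp.ofLp_fst, WithLp.ofLp_snd,
    inner_add_left, inner_add_right, adjoint_inner_left]
  ring

end BlockOp

theorem diagOp_eq_blockOp {H₀ : Type*} [NormedAddCommGroup H₀] [InnerProductSpace ℂ H₀]
    (a₁ a₂ : H₀ →L[ℂ] H₀) : diagOp a₁ a₂ = blockOp a₁ 0 0 a₂ := by
  ext v
  simp only [blockOp_apply, zero_apply, add_zero, zero_add]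
  rfl

/-- If a unitary `K` on `H = H₀ × H₀` implements the twist by grading,
`K ∘ diag(a₁, a₂) ∘ K* = diag(a₂, a₁)` for all `a₁, a₂` in a unital subalgebra `A` of `B(H₀)`,
then `K` is antidiagonal: `K (x, y) = (K₂ y, K₃ x)` for unitaries `K₂, K₃` commuting with `A`. -/
theorem twist_by_grading_antidiagonal
    {H₀ : Type*} [NormedAddCommGroup H₀] [InnerProductSpace ℂ H₀] [CompleteSpace H₀]
    (A : Subalgebra ℂ (H₀ →L[ℂ] H₀))
    (K : WithLp 2 (H₀ × H₀) →L[ℂ] WithLp 2 (H₀ × H₀))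
    (hK1 : K ∘L adjoint K = 1) (hK2 : adjoint K ∘L K = 1)
    (htw : ∀ a₁ ∈ A, ∀ a₂ ∈ A, K ∘L diagOp a₁ a₂ ∘L adjoint K = diagOp a₂ a₁) :
    ∃ K₂ K₃ : H₀ →L[ℂ] H₀,
      (K₂ ∘L adjoint K₂ = 1 ∧ adjoint K₂ ∘L K₂ = 1) ∧
      (K₃ ∘L adjoint K₃ = 1 ∧ adjoint K₃ ∘L K₃ = 1) ∧
      (∀ a ∈ A, K₂ ∘L a = a ∘L K₂) ∧
      (∀ a ∈ A, K₃ ∘L a = a ∘L K₃) ∧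
      ∀ x y : H₀,
        (WithLp.prodContinuousLinearEquiv 2 ℂ H₀ H₀)
            (K ((WithLp.prodContinuousLinearEquiv 2 ℂ H₀ H₀).symm (x, y))) = (K₂ y, K₃ x) := by
  have hcomm : ∀ a₁ ∈ A, ∀ a₂ ∈ A, K ∘L diagOp a₁ a₂ = diagOp a₂ a₁ ∘L K := fun a₁ h₁ a₂ h₂ => by
    rw [← htw a₁ h₁ a₂ h₂, comp_assoc, comp_assoc, hK2]
    rfl
  obtain ⟨a, b, c, d, rfl⟩ := exists_eq_blockOp K
  obtain ⟨rfl, rfl⟩ : a = 0 ∧ 0 = d := by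
    simpa [diagOp_eq_blockOp, blockOp_comp_blockOp, blockOp_inj, one_def] using
      hcomm 1 A.one_mem 0 A.zero_mem
  simp only [adjoint_blockOp, blockOp_comp_blockOp, one_eq_blockOp, blockOp_inj, map_zero,
    comp_zero, zero_comp, add_zero, zero_add, true_and] at hK1 hK2
  refine ⟨b, c, ⟨hK1.1, hK2.2⟩, ⟨hK1.2, hK2.1⟩, fun x hx => ?_, fun x hx => ?_, fun x y => by simp⟩
  · simpa [diagOp_eq_blockOp, blockOp_comp_blockOp, blockOp_inj] using hcomm 0 A.zero_mem x hx
  · simpa [diagOp_eq_blockOp, blockOp_comp_blockOp, blockOp_inj] using hcomm x hx 0 A.zero_mem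
end

section
/- Let H₀ be a complex Hilbert space and A a unital subalgebra of B(H₀). On H := H₀ × H₀, for a₁, a₂ ∈ A let diag(a₁, a₂) denote the bounded operator (x, y) ↦ (a₁ x, a₂ y). Suppose K is a unitary and self-adjoint operator on H (a fundamental symmetry) such that K ∘ diag(a₁, a₂) ∘ K* = diag(a₂, a₁) for all a₁, a₂ ∈ A. Then there exists a unitary operator σ on H₀ commuting with every element of A such that K(x, y) = (σ y, σ* x) for all (x, y) ∈ H. -/
open ContinuousLinearMap

section BlockOperators

variable {H₀ : Type*} [NormedAddCommGroup H₀] [InnerProductSpace ℂ H₀]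

noncomputable def offDiagOp (σ τ : H₀ →L[ℂ] H₀) : WithLp 2 (H₀ × H₀) →L[ℂ] WithLp 2 (H₀ × H₀) :=
  ((WithLp.prodContinuousLinearEquiv 2 ℂ H₀ H₀).symm :
      H₀ × H₀ →L[ℂ] WithLp 2 (H₀ × H₀)) ∘L
    ((σ ∘L snd ℂ H₀ H₀).prod (τ ∘L fst ℂ H₀ H₀)) ∘L
    ((WithLp.prodContinuousLinearEquiv 2 ℂ H₀ H₀) :
      WithLp 2 (H₀ × H₀) →L[ℂ] H₀ × H₀)

@[simp]
theorem diagOp_apply (a₁ a₂ : H₀ →L[ℂ] H₀) (v : WithLp 2 (H₀ × H₀)) :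
    diagOp a₁ a₂ v = WithLp.toLp 2 (a₁ v.fst, a₂ v.snd) :=
  rfl

@[simp]
theorem offDiagOp_apply (σ τ : H₀ →L[ℂ] H₀) (v : WithLp 2 (H₀ × H₀)) :
    offDiagOp σ τ v = WithLp.toLp 2 (σ v.snd, τ v.fst) :=
  rfl

theorem diagOp_one : diagOp (1 : H₀ →L[ℂ] H₀) 1 = 1 :=
  rfl

theorem diagOp_inj {a₁ a₂ b₁ b₂ : H₀ →L[ℂ] H₀} :
    diagOp a₁ a₂ = diagOp b₁ b₂ ↔ a₁ = b₁ ∧ a₂ = b₂ := by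
  refine ⟨fun h => ⟨?_, ?_⟩, fun ⟨h₁, h₂⟩ => h₁ ▸ h₂ ▸ rfl⟩
  · ext x
    simpa using congr(($h (WithLp.toLp 2 (x, 0))).fst)
  · ext y
    simpa using congr(($h (WithLp.toLp 2 (0, y))).snd)

theorem offDiagOp_inj {σ τ σ' τ' : H₀ →L[ℂ] H₀} :
    offDiagOp σ τ = offDiagOp σ' τ' ↔ σ = σ' ∧ τ = τ' := by
  refine ⟨fun h => ⟨?_, ?_⟩, fun ⟨h₁, h₂⟩ => h₁ ▸ h₂ ▸ rfl⟩
  · ext y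
    simpa using congr(($h (WithLp.toLp 2 (0, y))).fst)
  · ext x
    simpa using congr(($h (WithLp.toLp 2 (x, 0))).snd)

theorem offDiagOp_comp_offDiagOp (σ τ σ' τ' : H₀ →L[ℂ] H₀) :
    offDiagOp σ τ ∘L offDiagOp σ' τ' = diagOp (σ ∘L τ') (τ ∘L σ') :=
  rfl

theorem offDiagOp_comp_diagOp (σ τ a₁ a₂ : H₀ →L[ℂ] H₀) :
    offDiagOp σ τ ∘L diagOp a₁ a₂ = offDiagOp (σ ∘L a₂) (τ ∘L a₁) :=
  rfl

theorem diagOp_comp_offDiagOp (a₁ a₂ σ τ : H₀ →L[ℂ] H₀) :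
    diagOp a₁ a₂ ∘L offDiagOp σ τ = offDiagOp (a₁ ∘L σ) (a₂ ∘L τ) :=
  rfl

theorem adjoint_offDiagOp [CompleteSpace H₀] (σ τ : H₀ →L[ℂ] H₀) :
    adjoint (offDiagOp σ τ) = offDiagOp (adjoint τ) (adjoint σ) := by
  refine ((eq_adjoint_iff _ _).2 fun v w => ?_).symm
  rcases v with ⟨x, y⟩
  rcases w with ⟨x', y'⟩
  simp only [offDiagOp_apply, WithLp.toLp_fst, WithLp.toLp_snd, WithLp.prod_inner_apply,
    adjoint_inner_left]
  ring

theorem exists_eq_offDiagOp_of_comp_diagOp {K : WithLp 2 (H₀ × H₀) →L[ℂ] WithLp 2 (H₀ × H₀)}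
    (h₁ : K ∘L diagOp 1 0 = diagOp 0 1 ∘L K) (h₂ : K ∘L diagOp 0 1 = diagOp 1 0 ∘L K) :
    ∃ σ τ, K = offDiagOp σ τ := by
  let e := WithLp.prodContinuousLinearEquiv 2 ℂ H₀ H₀
  refine ⟨fst ℂ H₀ H₀ ∘L e ∘L K ∘L e.symm ∘L inr ℂ H₀ H₀,
    snd ℂ H₀ H₀ ∘L e ∘L K ∘L e.symm ∘L inl ℂ H₀ H₀, ?_⟩
  ext1 ⟨x, y⟩
  have hx : K (WithLp.toLp 2 (x, 0)) = WithLp.toLp 2 (0, (K (WithLp.toLp 2 (x, 0))).snd) := by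
    simpa using congr($h₁ (WithLp.toLp 2 (x, 0)))
  have hy : K (WithLp.toLp 2 (0, y)) = WithLp.toLp 2 ((K (WithLp.toLp 2 (0, y))).fst, 0) := by
    simpa using congr($h₂ (WithLp.toLp 2 (0, y)))
  calc K (WithLp.toLp 2 (x, y))
      = K (WithLp.toLp 2 (x, 0)) + K (WithLp.toLp 2 (0, y)) := by
        rw [← map_add, ← WithLp.toLp_add, Prod.mk_add_mk, add_zero, zero_add]
    _ = WithLp.toLp 2 ((K (WithLp.toLp 2 (0, y))).fst, (K (WithLp.toLp 2 (x, 0))).snd) := by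
        conv_lhs => rw [hx, hy, ← WithLp.toLp_add, Prod.mk_add_mk, add_zero, zero_add]
    _ = offDiagOp _ _ (WithLp.toLp 2 (x, y)) := rfl

end BlockOperators

theorem fundamental_twist_by_grading_form_general
    {H₀ : Type*} [NormedAddCommGroup H₀] [InnerProductSpace ℂ H₀] [CompleteSpace H₀]
    (A : Subalgebra ℂ (H₀ →L[ℂ] H₀))
    (K : WithLp 2 (H₀ × H₀) →L[ℂ] WithLp 2 (H₀ × H₀))
    (hK2 : adjoint K ∘L K = 1)
    (hKsa : adjoint K = K)
    (htw : ∀ a₁ ∈ A, ∀ a₂ ∈ A, K ∘L diagOp a₁ a₂ ∘L adjoint K = diagOp a₂ a₁) :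
    ∃ σ : H₀ →L[ℂ] H₀,
      (σ ∘L adjoint σ = 1 ∧ adjoint σ ∘L σ = 1) ∧
      (∀ a ∈ A, σ ∘L a = a ∘L σ) ∧
      ∀ x y : H₀,
        (WithLp.prodContinuousLinearEquiv 2 ℂ H₀ H₀)
            (K ((WithLp.prodContinuousLinearEquiv 2 ℂ H₀ H₀).symm (x, y))) =
          (σ y, adjoint σ x) := by
  have hcomm : ∀ a₁ ∈ A, ∀ a₂ ∈ A, K ∘L diagOp a₁ a₂ = diagOp a₂ a₁ ∘L K :=
    fun a₁ h₁ a₂ h₂ => by rw [← htw a₁ h₁ a₂ h₂, comp_assoc, comp_assoc, hK2, one_def, comp_id]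
  obtain ⟨σ, τ, rfl⟩ := exists_eq_offDiagOp_of_comp_diagOp
    (hcomm 1 A.one_mem 0 A.zero_mem) (hcomm 0 A.zero_mem 1 A.one_mem)
  obtain rfl : τ = adjoint σ := by
    rw [adjoint_offDiagOp, offDiagOp_inj] at hKsa
    exact hKsa.2.symm
  have hunitary : σ ∘L adjoint σ = 1 ∧ adjoint σ ∘L σ = 1 := by
    rwa [hKsa, offDiagOp_comp_offDiagOp, ← diagOp_one, diagOp_inj] at hK2
  refine ⟨σ, hunitary, fun a ha => ?_, fun x y => rfl⟩
  have hblocks := hcomm a ha a ha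
  rw [offDiagOp_comp_diagOp, diagOp_comp_offDiagOp, offDiagOp_inj] at hblocks
  exact hblocks.1

/-- If a fundamental symmetry `K` (unitary and self-adjoint) on `H = H₀ × H₀`
implements the twist by grading, `K ∘ diag(a₁, a₂) ∘ K* = diag(a₂, a₁)` for all `a₁, a₂` in a
unital subalgebra `A` of `B(H₀)`, then there is a unitary `σ` commuting with `A` such that
`K (x, y) = (σ y, σ* x)`. -/
theorem fundamental_twist_by_grading_form
    {H₀ : Type*} [NormedAddCommGroup H₀] [InnerProductSpace ℂ H₀] [CompleteSpace H₀]
    (A : Subalgebra ℂ (H₀ →L[ℂ] H₀))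
    (K : WithLp 2 (H₀ × H₀) →L[ℂ] WithLp 2 (H₀ × H₀))
    (hK1 : K ∘L adjoint K = 1) (hK2 : adjoint K ∘L K = 1)
    (hKsa : adjoint K = K)
    (htw : ∀ a₁ ∈ A, ∀ a₂ ∈ A, K ∘L diagOp a₁ a₂ ∘L adjoint K = diagOp a₂ a₁) :
    ∃ σ : H₀ →L[ℂ] H₀,
      (σ ∘L adjoint σ = 1 ∧ adjoint σ ∘L σ = 1) ∧
      (∀ a ∈ A, σ ∘L a = a ∘L σ) ∧
      ∀ x y : H₀,
        (WithLp.prodContinuousLinearEquiv 2 ℂ H₀ H₀)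
            (K ((WithLp.prodContinuousLinearEquiv 2 ℂ H₀ H₀).symm (x, y))) =
          (σ y, adjoint σ x) :=
  fundamental_twist_by_grading_form_general A K hK2 hKsa htw
end

section
/- Let A be an associative unital ℂ-algebra, N a natural number, and γ : Fin N → A a family satisfying γ a * γ b = −(γ b * γ a) for all a ≠ b. Let l be a duplicate-free list of elements of Fin N with length k, let J₀ be the product (in order) of γ over l, and suppose c is a complex number such that J := c • J₀ satisfies J * J = 1. Then for every index b ∈ Fin N: if b occurs in l, then (−1)^{k+1} • (J * γ b * J) = γ b, and if b does not occur in l, then (−1)^{k+1} • (J * γ b * J) = −(γ b). -/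
/-!
Moving `γ b` across the ordered product of `γ` over `l` costs a sign `-1` for every factor
other than `γ b` itself, so `J * γ b = ε * (γ b * J)` with `ε = (-1) ^ k` if `b ∉ l` and
`ε = (-1) ^ (k + 1)` if `b ∈ l`. Since `J * J = 1`, this gives `J * γ b * J = ε * γ b`.
-/

section Anticommuting

variable {ι A : Type*} [Ring A] {γ : ι → A}

theorem anticomm_mul_prod_mul_of_ne {P : A} {a b : ι} {n : ℕ}
    (hanti : γ a * γ b = -(γ b * γ a)) (hP : P * γ b = (-1) ^ n * (γ b * P)) :
    γ a * P * γ b = (-1) ^ (n + 1) * (γ b * (γ a * P)) := by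
  have hsign : Commute ((-1 : A) ^ n) (γ a) := (Commute.neg_one_left _).pow_left n
  rw [mul_assoc, hP, ← mul_assoc, ← hsign.eq, mul_assoc, ← mul_assoc (γ a), hanti, pow_succ]
  noncomm_ring

variable (hanti : ∀ a b, a ≠ b → γ a * γ b = -(γ b * γ a))
include hanti

theorem anticomm_prod_mul_of_not_mem {l : List ι} {b : ι} (hb : b ∉ l) :
    (l.map γ).prod * γ b = (-1) ^ l.length * (γ b * (l.map γ).prod) := by
  induction l with
  | nil => simp
  | cons a t ih =>
    exact anticomm_mul_prod_mul_of_ne (hanti a b (List.ne_of_not_mem_cons hb).symm)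
      (ih (List.not_mem_of_not_mem_cons hb))

theorem anticomm_prod_mul_of_mem {l : List ι} (hl : l.Nodup) {b : ι} (hb : b ∈ l) :
    (l.map γ).prod * γ b = (-1) ^ (l.length + 1) * (γ b * (l.map γ).prod) := by
  induction l with
  | nil => simp at hb
  | cons a t ih =>
    obtain ⟨hat, ht⟩ := List.nodup_cons.mp hl
    rcases List.mem_cons.mp hb with rfl | hbt
    · have hsign : Commute ((-1 : A) ^ t.length) (γ b) := (Commute.neg_one_left _).pow_left _
      simp only [List.map_cons, List.prod_cons, List.length_cons]
      rw [mul_assoc, anticomm_prod_mul_of_not_mem hanti hat, ← mul_assoc, ← hsign.eq]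
      noncomm_ring
    · exact anticomm_mul_prod_mul_of_ne (hanti a b (by rintro rfl; exact hat hbt)) (ih ht hbt)

end Anticommuting

theorem conj_eq_of_mul_eq_mul_mul {A : Type*} [Monoid A] {J x u : A} (hJ : J * J = 1)
    (hx : J * x = u * (x * J)) : J * x * J = u * x := by
  rw [hx, mul_assoc, mul_assoc, hJ, mul_one]

theorem smul_mul_eq_of_mul_eq {R A : Type*} [CommSemiring R] [Semiring A] [Algebra R A]
    {P x u : A} (c : R) (hx : P * x = u * (x * P)) : c • P * x = u * (x * (c • P)) := by
  rw [smul_mul_assoc, hx, mul_smul_comm, mul_smul_comm]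

theorem neg_one_pow_smul_eq_mul {R A : Type*} [CommRing R] [Ring A] [Algebra R A] (n : ℕ)
    (x : A) : ((-1 : R) ^ n) • x = (-1) ^ n * x := by
  rw [Algebra.smul_def, map_pow, map_neg, map_one]

/-- Let `A` be an associative unital `ℂ`-algebra and `γ : Fin N → A` a family
of pairwise anticommuting elements. Let `l` be a duplicate-free list in `Fin N` of length `k`,
`J₀` the ordered product of `γ` over `l`, and `c : ℂ` with `J := c • J₀` satisfying `J * J = 1`.
Then for every `b : Fin N`: if `b ∈ l` then `(−1)^{k+1} • (J * γ b * J) = γ b`, and if `b ∉ l`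
then `(−1)^{k+1} • (J * γ b * J) = −(γ b)`. -/
theorem reflection_by_fundamental_symmetry
    {A : Type*} [Ring A] [Algebra ℂ A] {N : ℕ} (γ : Fin N → A)
    (hanti : ∀ a b : Fin N, a ≠ b → γ a * γ b = -(γ b * γ a))
    (l : List (Fin N)) (hl : l.Nodup) (c : ℂ)
    (hJ : (c • (l.map γ).prod) * (c • (l.map γ).prod) = 1) :
    ∀ b : Fin N,
      (b ∈ l →
        ((-1 : ℂ) ^ (l.length + 1)) • ((c • (l.map γ).prod) * γ b * (c • (l.map γ).prod)) =
          γ b) ∧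
      (b ∉ l →
        ((-1 : ℂ) ^ (l.length + 1)) • ((c • (l.map γ).prod) * γ b * (c • (l.map γ).prod)) =
          -(γ b)) := by
  intro b
  have hconj : ∀ n, (l.map γ).prod * γ b = (-1) ^ n * (γ b * (l.map γ).prod) →
      ((-1 : ℂ) ^ (l.length + 1)) • ((c • (l.map γ).prod) * γ b * (c • (l.map γ).prod)) =
        (-1) ^ (l.length + 1 + n) * γ b := fun n hn => by
    rw [neg_one_pow_smul_eq_mul, conj_eq_of_mul_eq_mul_mul hJ (smul_mul_eq_of_mul_eq c hn),
      ← mul_assoc, ← pow_add]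
  refine ⟨fun hb => ?_, fun hb => ?_⟩
  · rw [hconj _ (anticomm_prod_mul_of_mem hanti hl hb), (Even.add_self _).neg_one_pow, one_mul]
  · rw [hconj _ (anticomm_prod_mul_of_not_mem hanti hb),
      Odd.neg_one_pow ⟨l.length, by ring⟩, neg_one_mul]
end

section
/- Let H be a complex Hilbert space and m, n natural numbers with n odd and 0 < n ≤ 2m. Let γ : Fin (2m) → B(H) be a family of unitary operators satisfying γ a ∘ γ b + γ b ∘ γ a = 2·η(a)•1 when a = b and γ a ∘ γ b + γ b ∘ γ a = 0 when a ≠ b, where η(a) = 1 if a < n and η(a) = −1 if n ≤ a. Define K := i^{−n(n−1)/2} • (γ 0 ∘ γ 1 ∘ ⋯ ∘ γ (n−1)). Then K is a fundamental symmetry (K = K* and K∘K = 1) and K ∘ γ a ∘ K = (γ a)* for every a ∈ Fin (2m). -/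
open ContinuousLinearMap

/-! Put `P = γ 0 ⋯ γ (n-1)` and `s = n(n-1)/2 = n.choose 2`. The first `n` gammas are unitary
with square `1`, hence self-adjoint, and they pairwise anticommute; reversing a product of `k`
anticommuting factors costs the sign `(-1)^(k.choose 2)`, so `P* = (-1)^s P`, and since `P` is
unitary, `P² = (-1)^s`. The scalar `c = i^(-s)` satisfies `c² = (-1)^s` and `conj c = c⁻¹`, which
makes `K = c P` self-adjoint with `K² = 1`. As `n` is odd, `γ a` commutes with `P` when `a < n`
(it anticommutes with the other `n - 1` factors) and anticommutes with it otherwise: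
`γ a P = η a P γ a`. Hence `K γ a K = η a γ a = (γ a)*`. -/

theorem mul_prod_ofFn_eq_smul {R A : Type*} [CommSemiring R] [Semiring A] [Algebra R A] {k : ℕ}
    (x : A) (g : Fin k → A) (σ : Fin k → R) (h : ∀ j, x * g j = σ j • (g j * x)) :
    x * (List.ofFn g).prod = (∏ j, σ j) • ((List.ofFn g).prod * x) := by
  induction k with
  | zero => simp
  | succ k ih =>
    rw [List.ofFn_succ, List.prod_cons, Fin.prod_univ_succ, ← mul_assoc, h 0, smul_mul_assoc,
      mul_assoc, ih (fun j => g j.succ) (fun j => σ j.succ) (fun j => h j.succ), mul_smul_comm,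
      smul_smul, mul_assoc]

theorem prod_ofFn_rev_of_anticomm {R A : Type*} [CommRing R] [Ring A] [Algebra R A] {k : ℕ}
    (g : Fin k → A) (h : ∀ i j, i ≠ j → g i * g j = -(g j * g i)) :
    (List.ofFn fun j => g j.rev).prod = (-1 : R) ^ k.choose 2 • (List.ofFn g).prod := by
  induction k with
  | zero => simp
  | succ k ih =>
    have hlast : g (Fin.last k) * (List.ofFn fun j => g j.castSucc).prod
        = (-1 : R) ^ k • ((List.ofFn fun j => g j.castSucc).prod * g (Fin.last k)) := by
      simpa using mul_prod_ofFn_eq_smul (g (Fin.last k)) (fun j => g j.castSucc)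
        (fun _ => (-1 : R))
        (fun j => by rw [h _ _ (Fin.castSucc_lt_last j).ne', neg_one_smul])
    rw [List.ofFn_succ, List.ofFn_succ' g, List.prod_cons, List.prod_concat, Fin.rev_zero]
    simp only [Fin.rev_succ]
    rw [ih (fun j => g j.castSucc) (fun i j hij => h _ _ (Fin.castSucc_injective _ |>.ne hij)),
      mul_smul_comm, hlast, smul_smul, ← pow_add, Nat.choose_succ_succ', Nat.choose_one_right,
      add_comm]

theorem star_prod_ofFn {A : Type*} [Monoid A] [StarMul A] {k : ℕ} (g : Fin k → A) :
    star (List.ofFn g).prod = (List.ofFn fun j => star (g j.rev)).prod := by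
  induction k with
  | zero => simp
  | succ k ih =>
    rw [List.ofFn_succ, List.prod_cons, star_mul, ih, List.ofFn_succ', List.prod_concat,
      Fin.rev_last]
    simp only [Fin.rev_castSucc]

section StarAlgebra

variable {R A : Type*} [CommRing R] [Ring A] [StarRing A] [Algebra R A]

theorem star_prod_ofFn_of_anticomm {k : ℕ} {g : Fin k → A} (hsa : ∀ j, IsSelfAdjoint (g j))
    (h : ∀ i j, i ≠ j → g i * g j = -(g j * g i)) :
    star (List.ofFn g).prod = (-1 : R) ^ k.choose 2 • (List.ofFn g).prod := by
  simp only [star_prod_ofFn, fun j => (hsa j).star_eq]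
  exact prod_ofFn_rev_of_anticomm g h

theorem prod_ofFn_mul_self_of_anticomm {k : ℕ} {g : Fin k → A} (hu : ∀ j, g j ∈ unitary A)
    (hsa : ∀ j, IsSelfAdjoint (g j)) (h : ∀ i j, i ≠ j → g i * g j = -(g j * g i)) :
    (List.ofFn g).prod * (List.ofFn g).prod = (-1 : R) ^ k.choose 2 • 1 := by
  have hP : (List.ofFn g).prod ∈ unitary A :=
    Submonoid.list_prod_mem _ (List.forall_mem_ofFn_iff.2 hu)
  have hsign : (-1 : R) ^ k.choose 2 * (-1) ^ k.choose 2 = 1 := by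
    rw [← mul_pow, neg_one_mul, neg_neg, one_pow]
  rw [← Unitary.star_mul_self_of_mem hP, star_prod_ofFn_of_anticomm (R := R) hsa h,
    smul_mul_assoc, smul_smul, hsign, one_smul]

theorem star_eq_smul_of_mul_self {u : A} (hu : u ∈ unitary A) {r : R} (hr : r * r = 1)
    (hsq : u * u = r • 1) : star u = r • u := by
  have hinv : u * (r • u) = 1 := by rw [mul_smul_comm, hsq, smul_smul, hr, one_smul]
  calc star u = star u * (u * (r • u)) := by rw [hinv, mul_one]
    _ = r • u := by rw [← mul_assoc, Unitary.star_mul_self_of_mem hu, one_mul]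

end StarAlgebra

theorem Complex.I_zpow_neg_mul_self (s : ℕ) :
    Complex.I ^ (-(s : ℤ)) * Complex.I ^ (-(s : ℤ)) = (-1) ^ s := by
  rw [zpow_neg, zpow_natCast, ← mul_inv, ← mul_pow, Complex.I_mul_I, ← inv_pow, inv_neg_one]

theorem Complex.conj_I_zpow (z : ℤ) : starRingEnd ℂ (Complex.I ^ z) = (Complex.I ^ z)⁻¹ := by
  rw [map_zpow₀, Complex.conj_I, ← Complex.inv_I, inv_zpow]

section FundamentalSymmetry

variable {A : Type*} [Ring A] [Algebra ℂ A] {P : A} {s : ℕ}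

theorem isSelfAdjoint_I_zpow_neg_smul [StarRing A] [StarModule ℂ A]
    (hP : star P = (-1 : ℂ) ^ s • P) :
    IsSelfAdjoint (Complex.I ^ (-(s : ℤ)) • P) := by
  rw [IsSelfAdjoint, star_smul, hP, smul_smul, RCLike.star_def, Complex.conj_I_zpow,
    ← Complex.I_zpow_neg_mul_self, inv_mul_cancel_left₀ (zpow_ne_zero _ Complex.I_ne_zero)]

theorem I_zpow_neg_smul_mul_self (hPP : P * P = (-1 : ℂ) ^ s • 1) :
    (Complex.I ^ (-(s : ℤ)) • P) * (Complex.I ^ (-(s : ℤ)) • P) = 1 := by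
  rw [smul_mul_smul, hPP, smul_smul, Complex.I_zpow_neg_mul_self, ← mul_pow, neg_one_mul,
    neg_neg, one_pow, one_smul]

theorem I_zpow_neg_smul_mul_mul_smul (hPP : P * P = (-1 : ℂ) ^ s • 1) {x : A} {σ : ℂ}
    (hx : x * P = σ • (P * x)) :
    (Complex.I ^ (-(s : ℤ)) • P) * (x * (Complex.I ^ (-(s : ℤ)) • P)) = σ • x := by
  rw [mul_smul_comm, smul_mul_smul, hx, mul_smul_comm, ← mul_assoc, hPP, smul_mul_assoc,
    one_mul, smul_smul, smul_smul, Complex.I_zpow_neg_mul_self, mul_right_comm, ← mul_pow,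
    neg_one_mul, neg_neg, one_pow, one_mul]

end FundamentalSymmetry

theorem Fin.prod_ite_castLE_eq {R : Type*} [CommRing R] {n N : ℕ} (hodd : Odd n) (h : n ≤ N)
    (a : Fin N) :
    ∏ j : Fin n, (if Fin.castLE h j = a then (1 : R) else -1) = if (a : ℕ) < n then 1 else -1 := by
  split_ifs with ha
  · have hj₀ : ∀ j : Fin n, Fin.castLE h j = a ↔ j = ⟨a, ha⟩ := by simp [Fin.ext_iff]
    simp only [hj₀, Finset.prod_ite, Finset.filter_eq', Finset.filter_ne', Finset.prod_const]
    simpa using (Nat.Odd.sub_odd hodd odd_one).neg_one_pow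
  · have hne : ∀ j : Fin n, Fin.castLE h j ≠ a := fun j hj => ha (hj ▸ j.isLt)
    simp only [hne, if_false, Fin.prod_const, hodd.neg_one_pow]

theorem mul_prod_ofFn_castLE_of_anticomm {R A : Type*} [CommRing R] [Ring A] [Algebra R A]
    {n N : ℕ} (hodd : Odd n) (h : n ≤ N) {γ : Fin N → A}
    (hanti : ∀ a b, a ≠ b → γ a * γ b = -(γ b * γ a)) (a : Fin N) :
    γ a * (List.ofFn fun j : Fin n => γ (Fin.castLE h j)).prod
      = (if (a : ℕ) < n then 1 else -1 : R) •
          ((List.ofFn fun j => γ (Fin.castLE h j)).prod * γ a) := by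
  rw [← Fin.prod_ite_castLE_eq hodd h a]
  refine mul_prod_ofFn_eq_smul _ _ _ fun j => ?_
  split_ifs with hja
  · rw [hja, one_smul]
  · rw [hanti _ _ (Ne.symm hja), neg_one_smul]

theorem spacelike_reflection_fundamental_symmetry_general
    {H : Type*} [NormedAddCommGroup H] [InnerProductSpace ℂ H] [CompleteSpace H]
    (m n : ℕ) (hodd : Odd n) (hnm : n ≤ 2 * m)
    (γ : Fin (2 * m) → H →L[ℂ] H)
    (hu : ∀ a, γ a ∘L adjoint (γ a) = 1 ∧ adjoint (γ a) ∘L γ a = 1)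
    (η : Fin (2 * m) → ℂ)
    (hη : ∀ a, η a = if (a : ℕ) < n then 1 else -1)
    (hcl1 : ∀ a, γ a ∘L γ a + γ a ∘L γ a = (2 * η a) • (1 : H →L[ℂ] H))
    (hcl2 : ∀ a b, a ≠ b → γ a ∘L γ b + γ b ∘L γ a = 0)
    (K : H →L[ℂ] H)
    (hKdef : K = (Complex.I ^ (-((n * (n - 1) / 2 : ℕ) : ℤ))) •
        (List.ofFn (fun j : Fin n => γ (Fin.castLE hnm j))).prod) :
    adjoint K = K ∧ K ∘L K = 1 ∧ ∀ a, K ∘L γ a ∘L K = adjoint (γ a) := by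
  simp only [← star_eq_adjoint, ← mul_def] at hu hcl1 hcl2 ⊢
  have hunitary : ∀ a, γ a ∈ unitary (H →L[ℂ] H) := fun a => Unitary.mem_iff.2 (hu a).symm
  have hsq : ∀ a, γ a * γ a = η a • 1 := fun a => by
    have h := hcl1 a
    rw [← two_smul ℂ, mul_smul] at h
    exact smul_right_injective _ two_ne_zero h
  have hη_sq : ∀ a, η a * η a = 1 := fun a => by rw [hη]; split_ifs <;> norm_num
  have hstar : ∀ a, star (γ a) = η a • γ a :=
    fun a => star_eq_smul_of_mul_self (hunitary a) (hη_sq a) (hsq a)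
  have hanti : ∀ a b, a ≠ b → γ a * γ b = -(γ b * γ a) :=
    fun a b hab => eq_neg_of_add_eq_zero_left (hcl2 a b hab)
  set g : Fin n → H →L[ℂ] H := fun j => γ (Fin.castLE hnm j)
  have hg_sa : ∀ j, IsSelfAdjoint (g j) := fun j => by
    rw [IsSelfAdjoint, hstar, hη, Fin.val_castLE, if_pos j.isLt, one_smul]
  have hg_anti : ∀ i j, i ≠ j → g i * g j = -(g j * g i) :=
    fun i j hij => hanti _ _ ((Fin.castLE_injective hnm).ne hij)
  have hPP := prod_ofFn_mul_self_of_anticomm (R := ℂ) (fun j => hunitary _) hg_sa hg_anti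
  rw [← Nat.choose_two_right] at hKdef
  subst hKdef
  refine ⟨isSelfAdjoint_I_zpow_neg_smul (star_prod_ofFn_of_anticomm hg_sa hg_anti),
    I_zpow_neg_smul_mul_self hPP, fun a => ?_⟩
  rw [hstar, hη]
  exact I_zpow_neg_smul_mul_mul_smul hPP (mul_prod_ofFn_castLE_of_anticomm hodd hnm hanti a)

/-- Let `γ : Fin (2m) → B(H)` be unitary pseudo-Riemannian gamma matrices for
a metric of signature `(n, 2m − n)` with `n` odd and `0 < n ≤ 2m`:
`γ a ∘ γ a + γ a ∘ γ a = 2·η(a) • 1` with `η(a) = 1` for `a < n` and `η(a) = −1` otherwise, and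
`γ a ∘ γ b + γ b ∘ γ a = 0` for `a ≠ b`. Then `K := i^{−n(n−1)/2} • (γ 0 ∘ ⋯ ∘ γ (n−1))` is a
fundamental symmetry (`K = K*`, `K ∘ K = 1`) and `K ∘ γ a ∘ K = (γ a)*` for every `a`. -/
theorem spacelike_reflection_fundamental_symmetry
    {H : Type*} [NormedAddCommGroup H] [InnerProductSpace ℂ H] [CompleteSpace H]
    (m n : ℕ) (hodd : Odd n) (hn0 : 0 < n) (hnm : n ≤ 2 * m)
    (γ : Fin (2 * m) → H →L[ℂ] H)
    (hu : ∀ a, γ a ∘L adjoint (γ a) = 1 ∧ adjoint (γ a) ∘L γ a = 1)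
    (η : Fin (2 * m) → ℂ)
    (hη : ∀ a, η a = if (a : ℕ) < n then 1 else -1)
    (hcl1 : ∀ a, γ a ∘L γ a + γ a ∘L γ a = (2 * η a) • (1 : H →L[ℂ] H))
    (hcl2 : ∀ a b, a ≠ b → γ a ∘L γ b + γ b ∘L γ a = 0)
    (K : H →L[ℂ] H)
    (hKdef : K = (Complex.I ^ (-((n * (n - 1) / 2 : ℕ) : ℤ))) •
        (List.ofFn (fun j : Fin n => γ (Fin.castLE hnm j))).prod) :
    adjoint K = K ∧ K ∘L K = 1 ∧ ∀ a, K ∘L γ a ∘L K = adjoint (γ a) :=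
  spacelike_reflection_fundamental_symmetry_general m n hodd hnm γ hu η hη hcl1 hcl2 K hKdef
end
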